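/- arXiv:1009.5749 — 2 statements merged into one kernel-verified Lean document; each statement's English description precedes it below -/
import Mathlib

section
/- Let (M_n)_{n≥1} be a random process satisfying P(|M_n| ≥ t√n) ≤ a·e^{−bt²} for all t ≥ 0, n ≥ 1, with constants a, b > 0. Define recursively M̄^{(0)}_n = M_n and M̄^{(k+1)}_{n+1} = (n+1)·(1/(n+1))Σ_{p=0}^{n} (1/(p+1))·M̄^{(k)}_{p+1}. Then for every k ≥ 0, n ≥ 1, t ≥ 0: P(|M̄^{(k)}_n| ≥ t√n) ≤ a·n^k·e^{−bt²/4^k}. -/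
open MeasureTheory

/-- The iterated averaged processes
`M̄^{(0)} = M`, `M̄^{(k+1)}_{n+1} = Σ_{p=0}^n (1/(p+1)) M̄^{(k)}_{p+1}`. -/
noncomputable def Mbar {Ω : Type*} (M : ℕ → Ω → ℝ) : ℕ → ℕ → Ω → ℝ
  | 0, n, ω => M n ω
  | _ + 1, 0, _ => 0
  | k + 1, m + 1, ω =>
      ∑ p ∈ Finset.range (m + 1), (1 / ((p : ℝ) + 1)) * Mbar M k (p + 1) ω

lemma sum_inv_sqrt_le (n : ℕ) :
    ∑ p ∈ Finset.range n, 1 / Real.sqrt (p + 1) ≤ 2 * Real.sqrt n := by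
  induction n with
  | zero => simp
  | succ n ih =>
    rw [Finset.sum_range_succ]
    have hs : Real.sqrt n ^ 2 = n := Real.sq_sqrt (by positivity)
    have hu : Real.sqrt (n + 1) ^ 2 = n + 1 := Real.sq_sqrt (by positivity)
    have hupos : 0 < Real.sqrt ((n : ℝ) + 1) := Real.sqrt_pos.mpr (by positivity)
    have hsnn : 0 ≤ Real.sqrt n := Real.sqrt_nonneg _
    have key : 1 / Real.sqrt ((n : ℝ) + 1) ≤
        2 * Real.sqrt ((n : ℝ) + 1) - 2 * Real.sqrt n := by
      rw [div_le_iff₀ hupos]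
      nlinarith [sq_nonneg (Real.sqrt ((n:ℝ)+1) - Real.sqrt n),
        sq_nonneg (Real.sqrt ((n:ℝ)+1) * Real.sqrt n - (n : ℝ) - 1/2),
        mul_nonneg hupos.le hsnn]
    have : ((n : ℝ) + 1) = ((n + 1 : ℕ) : ℝ) := by push_cast; ring
    calc ∑ p ∈ Finset.range n, 1 / Real.sqrt (p + 1) + 1 / Real.sqrt ((n : ℝ) + 1)
        ≤ 2 * Real.sqrt n + (2 * Real.sqrt ((n : ℝ) + 1) - 2 * Real.sqrt n) :=
          add_le_add ih key
      _ = 2 * Real.sqrt ((n + 1 : ℕ) : ℝ) := by push_cast; ring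

/-- If `P(|M_n| ≥ t√n) ≤ a e^{−b t²}` for all `t ≥ 0`, `n ≥ 1`, then
`P(|M̄^{(k)}_n| ≥ t√n) ≤ a n^k e^{−b t²/4^k}`. -/
theorem stmt14 {Ω : Type*} {mΩ : MeasurableSpace Ω}
    (P : Measure Ω) [IsProbabilityMeasure P]
    (M : ℕ → Ω → ℝ) (a b : ℝ) (ha : 0 < a) (hb : 0 < b)
    (h : ∀ t : ℝ, 0 ≤ t → ∀ n : ℕ, 1 ≤ n →
      P {ω | t * Real.sqrt n ≤ |M n ω|} ≤ ENNReal.ofReal (a * Real.exp (-b * t ^ 2))) :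
    ∀ k : ℕ, ∀ n : ℕ, 1 ≤ n → ∀ t : ℝ, 0 ≤ t →
      P {ω | t * Real.sqrt n ≤ |Mbar M k n ω|} ≤
        ENNReal.ofReal (a * (n : ℝ) ^ k * Real.exp (-b * t ^ 2 / 4 ^ k)) := by
  intro k
  induction k with
  | zero =>
    intro n hn t ht
    simpa [Mbar] using h t ht n hn
  | succ k ih =>
    intro n hn t ht
    obtain ⟨m, rfl⟩ : ∃ m, n = m + 1 := ⟨n - 1, by omega⟩
    -- inclusion in a union
    have hsub : {ω | t * Real.sqrt (m + 1) ≤ |Mbar M (k + 1) (m + 1) ω|} ⊆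
        ⋃ p ∈ Finset.range (m + 1),
          {ω | (t / 2) * Real.sqrt (p + 1) ≤ |Mbar M k (p + 1) ω|} := by
      intro ω hω
      by_contra hcon
      simp only [Set.mem_iUnion, Set.mem_setOf_eq, not_exists, not_le] at hcon
      have hω' : t * Real.sqrt ((m : ℝ) + 1) ≤ |Mbar M (k + 1) (m + 1) ω| := by
        simpa using hω
      have hstep : |Mbar M (k + 1) (m + 1) ω| < t * Real.sqrt ((m : ℝ) + 1) := by
        have h1 : |Mbar M (k + 1) (m + 1) ω| ≤
            ∑ p ∈ Finset.range (m + 1), (1 / ((p : ℝ) + 1)) * |Mbar M k (p + 1) ω| := by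
          rw [show Mbar M (k + 1) (m + 1) ω =
              ∑ p ∈ Finset.range (m + 1), (1 / ((p : ℝ) + 1)) * Mbar M k (p + 1) ω from rfl]
          refine (Finset.abs_sum_le_sum_abs _ _).trans (le_of_eq ?_)
          refine Finset.sum_congr rfl fun p _ => ?_
          rw [abs_mul, abs_of_nonneg (by positivity : (0:ℝ) ≤ 1 / ((p : ℝ) + 1))]
        have h2 : ∑ p ∈ Finset.range (m + 1), (1 / ((p : ℝ) + 1)) * |Mbar M k (p + 1) ω| <
            ∑ p ∈ Finset.range (m + 1), (t / 2) * (1 / Real.sqrt ((p : ℝ) + 1)) := by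
          refine Finset.sum_lt_sum_of_nonempty ⟨0, Finset.mem_range.mpr (by omega)⟩
            fun p hp => ?_
          have hlt := hcon p hp
          have hsp : Real.sqrt ((p : ℝ) + 1) ^ 2 = (p : ℝ) + 1 :=
            Real.sq_sqrt (by positivity)
          have hspos : 0 < Real.sqrt ((p : ℝ) + 1) := Real.sqrt_pos.mpr (by positivity)
          have heq : (1 / ((p : ℝ) + 1)) * (t / 2 * Real.sqrt ((p : ℝ) + 1)) =
              t / 2 * (1 / Real.sqrt ((p : ℝ) + 1)) := by
            have hds : Real.sqrt ((p : ℝ) + 1) / ((p : ℝ) + 1) =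
                1 / Real.sqrt ((p : ℝ) + 1) := Real.sqrt_div_self'
            calc (1 / ((p : ℝ) + 1)) * (t / 2 * Real.sqrt ((p : ℝ) + 1))
                = t / 2 * (Real.sqrt ((p : ℝ) + 1) / ((p : ℝ) + 1)) := by ring
              _ = t / 2 * (1 / Real.sqrt ((p : ℝ) + 1)) := by rw [hds]
          calc (1 / ((p : ℝ) + 1)) * |Mbar M k (p + 1) ω|
              < (1 / ((p : ℝ) + 1)) * (t / 2 * Real.sqrt ((p : ℝ) + 1)) := by
                exact mul_lt_mul_of_pos_left (by simpa using hlt) (by positivity)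
            _ = t / 2 * (1 / Real.sqrt ((p : ℝ) + 1)) := heq
        have h3 : ∑ p ∈ Finset.range (m + 1), (t / 2) * (1 / Real.sqrt ((p : ℝ) + 1)) ≤
            t * Real.sqrt ((m : ℝ) + 1) := by
          rw [← Finset.mul_sum]
          have := sum_inv_sqrt_le (m + 1)
          push_cast at this ⊢
          nlinarith [Real.sqrt_nonneg ((m : ℝ) + 1)]
        linarith
      linarith
    have hcard : ∀ p ∈ Finset.range (m + 1),
        P {ω | (t / 2) * Real.sqrt ((p : ℝ) + 1) ≤ |Mbar M k (p + 1) ω|} ≤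
          ENNReal.ofReal (a * ((m : ℝ) + 1) ^ k *
            Real.exp (-b * t ^ 2 / 4 ^ (k + 1))) := by
      intro p hp
      have hip := ih (p + 1) (by omega) (t / 2) (by positivity)
      have hexp : -b * (t / 2) ^ 2 / 4 ^ k = -b * t ^ 2 / 4 ^ (k + 1) := by
        rw [div_eq_div_iff (by positivity : (4:ℝ) ^ k ≠ 0)
          (by positivity : (4:ℝ) ^ (k + 1) ≠ 0), pow_succ]
        ring
      have hcast : ((p + 1 : ℕ) : ℝ) = (p : ℝ) + 1 := by push_cast; ring
      rw [hcast, hexp] at hip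
      refine hip.trans (ENNReal.ofReal_le_ofReal ?_)
      have hpm : (p : ℝ) + 1 ≤ (m : ℝ) + 1 := by
        have hpm' : (p : ℝ) ≤ m := by
          exact_mod_cast Nat.lt_succ_iff.mp (Finset.mem_range.mp hp)
        linarith
      have hpow : ((p : ℝ) + 1) ^ k ≤ ((m : ℝ) + 1) ^ k :=
        pow_le_pow_left₀ (by positivity) hpm k
      exact mul_le_mul_of_nonneg_right (mul_le_mul_of_nonneg_left hpow ha.le)
        (Real.exp_pos _).le
    simp only [Nat.cast_add, Nat.cast_one]
    calc P {ω | t * Real.sqrt ((m : ℝ) + 1) ≤ |Mbar M (k + 1) (m + 1) ω|}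
        ≤ P (⋃ p ∈ Finset.range (m + 1),
            {ω | (t / 2) * Real.sqrt ((p : ℝ) + 1) ≤ |Mbar M k (p + 1) ω|}) :=
          measure_mono hsub
      _ ≤ ∑ p ∈ Finset.range (m + 1),
            P {ω | (t / 2) * Real.sqrt ((p : ℝ) + 1) ≤ |Mbar M k (p + 1) ω|} :=
          measure_biUnion_finset_le _ _
      _ ≤ ∑ _p ∈ Finset.range (m + 1),
            ENNReal.ofReal (a * ((m : ℝ) + 1) ^ k * Real.exp (-b * t ^ 2 / 4 ^ (k + 1))) :=
          Finset.sum_le_sum hcard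
      _ ≤ ENNReal.ofReal (a * ((m : ℝ) + 1) ^ (k + 1) *
            Real.exp (-b * t ^ 2 / 4 ^ (k + 1))) := by
          rw [Finset.sum_const, Finset.card_range, nsmul_eq_mul,
            ← ENNReal.ofReal_natCast, ← ENNReal.ofReal_mul (by positivity)]
          refine ENNReal.ofReal_le_ofReal (le_of_eq ?_)
          push_cast
          ring
end

section
/- Time-averaged Feynman–Kac semigroup factorization: define Q_l(f) := G_{l−1}·L_l(f), Q_{l,k} := Q_l Q_{l+1}⋯Q_k, P_{l,k}(f) := Q_{l,k}(f)/Q_{l,k}(1), and H_{l,k} := Q_{l,k}(1)/Q_{l,k−1}(1). Let Φ̄^{(l)} be the time-averaged map on sequences of probability measures, Φ̄^{(l)}_n(η) = (1/(n+1))Σ_{p=0}^n Φ_l(η_p), and Φ̄^{(k,l)} = Φ̄^{(k)}∘⋯∘Φ̄^{(l)} its semigroup. Then for all l ≤ k, Φ̄^{(k,l)}(η) = Ψ̄^{(k,l)}(η)P_{l,k}, where Ψ̄^{(k,l)} = Ψ̄^{(l),H_{l,k}}∘Ψ̄^{(l),H_{l,k−1}}∘⋯∘Ψ̄^{(l),H_{l,l}}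 and Ψ̄^{(l),H}_n(η) = (1/(n+1))Σ_{p=0}^n Ψ^H(η_p) is the time-averaged Boltzmann–Gibbs transformation Ψ^H(μ)(f) = μ(Hf)/μ(H). -/
open MeasureTheory ProbabilityTheory
open scoped ENNReal

/-- Boltzmann–Gibbs transformation `Ψ^H(μ)(dx) = H(x) μ(dx) / μ(H)`. -/
noncomputable def BG {α : Type*} [MeasurableSpace α] (H : α → ℝ) (μ : Measure α) :
    Measure α :=
  ((μ.withDensity fun x => ENNReal.ofReal (H x)) Set.univ)⁻¹ •
    μ.withDensity fun x => ENNReal.ofReal (H x)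

variable {S : ℕ → Type*} [∀ l, MeasurableSpace (S l)]

/-- Feynman–Kac transformation `Φ_{l+1}(μ) = Ψ^{G_l}(μ) L_{l+1}`. -/
noncomputable def PhiFK (G : ∀ l, S l → ℝ) (L : ∀ l, Kernel (S l) (S (l + 1)))
    (l : ℕ) (μ : Measure (S l)) : Measure (S (l + 1)) :=
  (BG (G l) μ).bind (L l)

/-- Time-averaged Feynman–Kac map on flows of measures:
`Φ̄_n(η) = (1/(n+1)) Σ_{p=0}^n Φ(η_p)`. -/
noncomputable def PhiBar (G : ∀ l, S l → ℝ) (L : ∀ l, Kernel (S l) (S (l + 1)))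
    (l : ℕ) (η : ℕ → Measure (S l)) : ℕ → Measure (S (l + 1)) :=
  fun n => ((n : ℝ≥0∞) + 1)⁻¹ • ∑ p ∈ Finset.range (n + 1), PhiFK G L l (η p)

/-- Semigroup of the time-averaged Feynman–Kac maps:
`Φ̄^{(l+j+1,l+1)} = Φ̄^{(l+j+1)} ∘ ⋯ ∘ Φ̄^{(l+1)}` (with `j + 1` factors). -/
noncomputable def PhiBarC (G : ∀ l, S l → ℝ) (L : ∀ l, Kernel (S l) (S (l + 1)))
    (l : ℕ) : (j : ℕ) → (ℕ → Measure (S l)) → ℕ → Measure (S (l + j + 1))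
  | 0 => PhiBar G L l
  | j + 1 => fun η => PhiBar G L (l + j + 1) (PhiBarC G L l j η)

/-- The Feynman–Kac integral semigroup `Q_{l,k} = Q_l ⋯ Q_k` with
`Q_l(f) = G_{l-1} · L_l(f)`; here `QQ G L l j` corresponds to `Q_{l+1,l+j+1}`,
mapping functions on `S^{(l+j+1)}` to functions on `S^{(l)}`. -/
noncomputable def QQ (G : ∀ l, S l → ℝ) (L : ∀ l, Kernel (S l) (S (l + 1)))
    (l : ℕ) : (j : ℕ) → (S (l + j + 1) → ℝ) → S l → ℝ
  | 0 => fun f x => G l x * ∫ y, f y ∂(L l x)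
  | j + 1 => fun f => QQ G L l j fun x => G (l + j + 1) x * ∫ y, f y ∂(L (l + j + 1) x)

/-- Time-averaged Boltzmann–Gibbs transformation
`Ψ̄^{(l),H}_n(η) = (1/(n+1)) Σ_{p=0}^n Ψ^H(η_p)`. -/
noncomputable def PsiBar (l : ℕ) (H : S l → ℝ) (η : ℕ → Measure (S l)) :
    ℕ → Measure (S l) :=
  fun n => ((n : ℝ≥0∞) + 1)⁻¹ • ∑ p ∈ Finset.range (n + 1), BG H (η p)

/-- The potential functions `H_{l,k} = Q_{l,k}(1)/Q_{l,k-1}(1)` (with the convention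
`Q_{l,l-1}(1) = 1`). -/
noncomputable def Hfun (G : ∀ l, S l → ℝ) (L : ∀ l, Kernel (S l) (S (l + 1)))
    (l : ℕ) : ℕ → S l → ℝ
  | 0 => QQ G L l 0 fun _ => 1
  | j + 1 => fun x => QQ G L l (j + 1) (fun _ => 1) x / QQ G L l j (fun _ => 1) x

/-- The composition `Ψ̄^{(k,l)} = Ψ̄^{(l),H_{l,k}} ∘ ⋯ ∘ Ψ̄^{(l),H_{l,l}}`. -/
noncomputable def PsiBarC (G : ∀ l, S l → ℝ) (L : ∀ l, Kernel (S l) (S (l + 1)))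
    (l : ℕ) : ℕ → (ℕ → Measure (S l)) → ℕ → Measure (S l)
  | 0 => PsiBar l (Hfun G L l 0)
  | j + 1 => fun η => PsiBar l (Hfun G L l (j + 1)) (PsiBarC G L l j η)

/-!
The one-step identity `Φ_{k+1}(ν)(f) = ν(Q_{k+1} f) / ν(G_k)` is Fubini for `ν.bind L_k`.
If `ν = μ P_{l,k}` weakly, numerator and denominator become `μ`-integrals of
`Q_{l,k+1} f / Q_{l,k} 1` and of `Q_{l,k} G_k / Q_{l,k} 1 = Q_{l,k+1} 1 / Q_{l,k} 1 = H_{l,k+1}`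
(as `L_{k+1}` is Markov), and their quotient is `Ψ^{H_{l,k+1}}(μ)(P_{l,k+1} f)`.
Time averaging is linear in the measure, so this passes to the averaged flows, and induction on
`k - l` concludes. All integrals make sense because `P_{l,k}` maps bounded measurable functions
to bounded measurable ones, by positivity of `Q_{l,k}`: `|Q_{l,k} f| ≤ ‖f‖_∞ Q_{l,k} 1`.
-/

section General

variable {α β : Type*} [MeasurableSpace α] [MeasurableSpace β]

def IsBddMeasurable (f : α → ℝ) : Prop :=
  Measurable f ∧ ∃ C, ∀ x, |f x| ≤ C

lemma IsBddMeasurable.integrable {f : α → ℝ} (hf : IsBddMeasurable f) (μ : Measure α)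
    [IsFiniteMeasure μ] : Integrable f μ :=
  let ⟨hm, C, hC⟩ := hf
  .of_bound hm.aestronglyMeasurable C (ae_of_all _ hC)

lemma IsBddMeasurable.const (c : ℝ) : IsBddMeasurable fun _ : α => c :=
  ⟨measurable_const, |c|, fun _ => le_rfl⟩

lemma integral_bind {μ : Measure α} [SFinite μ] {κ : Kernel α β} [IsSFiniteKernel κ]
    {f : β → ℝ} (hf : Integrable f (μ.bind κ)) :
    ∫ y, f y ∂(μ.bind κ) = ∫ x, ∫ y, f y ∂(κ x) ∂μ := by
  rw [Measure.comp_eq_comp_const_apply] at hf ⊢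
  rw [Kernel.integral_comp hf]
  rfl

lemma integral_pos_of_forall_pos {μ : Measure α} [NeZero μ] {f : α → ℝ}
    (hf : Integrable f μ) (hpos : ∀ x, 0 < f x) : 0 < ∫ x, f x ∂μ := by
  rw [integral_pos_iff_support_of_nonneg (fun x => (hpos x).le) hf]
  suffices Function.support f = Set.univ by simp [this, NeZero.ne μ]
  exact Set.eq_univ_of_forall fun x => (hpos x).ne'

lemma withDensity_ofReal_univ {H : α → ℝ} {μ : Measure α} (hH0 : ∀ x, 0 ≤ H x)
    (hint : Integrable H μ) :
    (μ.withDensity fun x => ENNReal.ofReal (H x)) Set.univ = ENNReal.ofReal (∫ x, H x ∂μ) := by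
  rw [withDensity_apply _ .univ, setLIntegral_univ,
    ofReal_integral_eq_lintegral_ofReal hint (ae_of_all _ hH0)]

lemma integral_BG {H : α → ℝ} {μ : Measure α} (hH : Measurable H) (hH0 : ∀ x, 0 ≤ H x)
    (hint : Integrable H μ) (f : α → ℝ) :
    ∫ x, f x ∂(BG H μ) = (∫ x, H x * f x ∂μ) / ∫ x, H x ∂μ := by
  rw [BG, integral_smul_measure, withDensity_ofReal_univ hH0 hint,
    integral_withDensity_eq_integral_toReal_smul hH.ennreal_ofReal
      (ae_of_all _ fun _ => ENNReal.ofReal_lt_top),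
    ENNReal.toReal_inv, ENNReal.toReal_ofReal (integral_nonneg hH0), smul_eq_mul, inv_mul_eq_div]
  simp only [ENNReal.toReal_ofReal (hH0 _), smul_eq_mul]

lemma isProbabilityMeasure_BG {H : α → ℝ} {μ : Measure α} [NeZero μ]
    (hpos : ∀ x, 0 < H x) (hint : Integrable H μ) : IsProbabilityMeasure (BG H μ) := by
  have hmass := integral_pos_of_forall_pos hint hpos
  constructor
  rw [BG, Measure.smul_apply, withDensity_ofReal_univ (fun x => (hpos x).le) hint, smul_eq_mul,
    ENNReal.inv_mul_cancel (ENNReal.ofReal_pos.mpr hmass).ne' ENNReal.ofReal_ne_top]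

lemma isProbabilityMeasure_avg (μ : ℕ → Measure α) [∀ p, IsProbabilityMeasure (μ p)] (n : ℕ) :
    IsProbabilityMeasure (((n : ℝ≥0∞) + 1)⁻¹ • ∑ p ∈ Finset.range (n + 1), μ p) := by
  constructor
  simp only [Measure.smul_apply, Measure.finsetSum_apply, measure_univ, Finset.sum_const,
    Finset.card_range, nsmul_eq_mul, mul_one, Nat.cast_add, Nat.cast_one, smul_eq_mul]
  exact ENNReal.inv_mul_cancel (by simp) (by simp)

lemma integral_avg_congr {μ : ℕ → Measure α} {ν : ℕ → Measure β} {f : α → ℝ} {g : β → ℝ}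
    (hf : ∀ p, Integrable f (μ p)) (hg : ∀ p, Integrable g (ν p))
    (h : ∀ p, ∫ x, f x ∂(μ p) = ∫ y, g y ∂(ν p)) (n : ℕ) :
    ∫ x, f x ∂(((n : ℝ≥0∞) + 1)⁻¹ • ∑ p ∈ Finset.range (n + 1), μ p) =
      ∫ y, g y ∂(((n : ℝ≥0∞) + 1)⁻¹ • ∑ p ∈ Finset.range (n + 1), ν p) := by
  simp only [integral_smul_measure, integral_finsetSum_measure fun p _ => hf p,
    integral_finsetSum_measure fun p _ => hg p, h]

end General

section FeynmanKac

variable {S : ℕ → Type*} [∀ l, MeasurableSpace (S l)] {G : ∀ l, S l → ℝ}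
  {L : ∀ l, Kernel (S l) (S (l + 1))}

/-- The paper's `Q_{m+1}`; thus `QQ G L l j = Qstep G L l ∘ ⋯ ∘ Qstep G L (l + j)`. -/
noncomputable def Qstep (G : ∀ l, S l → ℝ) (L : ∀ l, Kernel (S l) (S (l + 1))) (m : ℕ)
    (f : S (m + 1) → ℝ) : S m → ℝ :=
  fun x => G m x * ∫ y, f y ∂(L m x)

lemma QQ_zero (l : ℕ) (f : S (l + 0 + 1) → ℝ) : QQ G L l 0 f = Qstep G L l f := rfl

lemma QQ_succ (l j : ℕ) (f : S (l + (j + 1) + 1) → ℝ) :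
    QQ G L l (j + 1) f = QQ G L l j (Qstep G L (l + j + 1) f) := rfl

lemma Qstep_const_mul (m : ℕ) (c : ℝ) (f : S (m + 1) → ℝ) :
    Qstep G L m (fun y => c * f y) = fun x => c * Qstep G L m f x := by
  funext x
  simp only [Qstep, integral_const_mul]
  ring

lemma QQ_const_mul (l j : ℕ) (c : ℝ) (f : S (l + j + 1) → ℝ) :
    QQ G L l j (fun y => c * f y) = fun x => c * QQ G L l j f x := by
  induction j with
  | zero => exact Qstep_const_mul l c f
  | succ j ih => exact (congrArg (QQ G L l j) (Qstep_const_mul (l + j + 1) c f)).trans (ih _)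

lemma QQ_const (l j : ℕ) (c : ℝ) :
    QQ G L l j (fun _ => c) = fun x => c * QQ G L l j (fun _ => 1) x := by
  simpa using QQ_const_mul (G := G) (L := L) l j c (fun _ => 1)

variable [∀ l, IsMarkovKernel (L l)]

lemma Qstep_one (m : ℕ) : Qstep G L m (fun _ => 1) = G m := by
  funext x
  simp [Qstep]

lemma QQ_succ_one (l j : ℕ) : QQ G L l (j + 1) (fun _ => 1) = QQ G L l j (G (l + j + 1)) :=
  congrArg (QQ G L l j) (Qstep_one _)

lemma Hfun_succ (l j : ℕ) :
    Hfun G L l (j + 1) = fun x => QQ G L l j (G (l + j + 1)) x / QQ G L l j (fun _ => 1) x := by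
  rw [Hfun, QQ_succ_one]

variable (hG : ∀ l, IsBddMeasurable (G l))
include hG

lemma isBddMeasurable_Qstep {m : ℕ} {f : S (m + 1) → ℝ} (hf : IsBddMeasurable f) :
    IsBddMeasurable (Qstep G L m f) := by
  obtain ⟨hGm, CG, hCG⟩ := hG m
  obtain ⟨hfm, C, hC⟩ := hf
  refine ⟨hGm.mul hfm.stronglyMeasurable.integral_kernel.measurable, CG * C, fun x => ?_⟩
  have hint : |∫ y, f y ∂(L m x)| ≤ C := by
    simpa [Real.norm_eq_abs] using norm_integral_le_of_norm_le_const (μ := L m x)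
      (ae_of_all _ fun y => (Real.norm_eq_abs (f y)).trans_le (hC y))
  rw [Qstep, abs_mul]
  exact mul_le_mul (hCG x) hint (abs_nonneg _) ((abs_nonneg _).trans (hCG x))

lemma isBddMeasurable_QQ {l j : ℕ} {f : S (l + j + 1) → ℝ} (hf : IsBddMeasurable f) :
    IsBddMeasurable (QQ G L l j f) := by
  induction j with
  | zero => exact isBddMeasurable_Qstep hG hf
  | succ j ih => exact ih (isBddMeasurable_Qstep hG hf)

variable (hGpos : ∀ l x, 0 < G l x)
include hGpos

omit hG in
lemma Qstep_mono {m : ℕ} {f g : S (m + 1) → ℝ} (hf : IsBddMeasurable f)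
    (hg : IsBddMeasurable g) (hfg : f ≤ g) : Qstep G L m f ≤ Qstep G L m g := fun x =>
  mul_le_mul_of_nonneg_left (integral_mono (hf.integrable _) (hg.integrable _) hfg)
    (hGpos m x).le

omit hG in
lemma Qstep_pos {m : ℕ} {f : S (m + 1) → ℝ} (hf : IsBddMeasurable f) (hpos : ∀ y, 0 < f y)
    (x : S m) : 0 < Qstep G L m f x :=
  mul_pos (hGpos m x) (integral_pos_of_forall_pos (hf.integrable _) hpos)

lemma QQ_mono {l j : ℕ} {f g : S (l + j + 1) → ℝ} (hf : IsBddMeasurable f)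
    (hg : IsBddMeasurable g) (hfg : f ≤ g) : QQ G L l j f ≤ QQ G L l j g := by
  induction j with
  | zero => exact Qstep_mono hGpos hf hg hfg
  | succ j ih =>
    exact ih (isBddMeasurable_Qstep hG hf) (isBddMeasurable_Qstep hG hg)
      (Qstep_mono hGpos hf hg hfg)

lemma QQ_pos {l j : ℕ} {f : S (l + j + 1) → ℝ} (hf : IsBddMeasurable f) (hpos : ∀ y, 0 < f y)
    (x : S l) : 0 < QQ G L l j f x := by
  induction j with
  | zero => exact Qstep_pos hGpos hf hpos x
  | succ j ih => exact ih (isBddMeasurable_Qstep hG hf) (Qstep_pos hGpos hf hpos)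

lemma QQ_one_pos (l j : ℕ) (x : S l) : 0 < QQ G L l j (fun _ => 1) x :=
  QQ_pos hG hGpos (IsBddMeasurable.const 1) (fun _ => one_pos) x

lemma abs_QQ_div_le {l j : ℕ} {f : S (l + j + 1) → ℝ} (hf : IsBddMeasurable f) {C : ℝ}
    (hC : ∀ y, |f y| ≤ C) (x : S l) :
    |QQ G L l j f x / QQ G L l j (fun _ => 1) x| ≤ C := by
  have hone : 0 < QQ G L l j (fun _ => 1) x := QQ_one_pos hG hGpos l j x
  have hlo : QQ G L l j (fun _ => -C) x ≤ QQ G L l j f x :=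
    QQ_mono hG hGpos (IsBddMeasurable.const _) hf (fun y => neg_le_of_abs_le (hC y)) x
  have hhi : QQ G L l j f x ≤ QQ G L l j (fun _ => C) x :=
    QQ_mono hG hGpos hf (IsBddMeasurable.const _) (fun y => le_of_abs_le (hC y)) x
  rw [QQ_const] at hlo hhi
  rw [abs_le, le_div_iff₀ hone, div_le_iff₀ hone]
  exact ⟨hlo, hhi⟩

lemma isBddMeasurable_QQ_div {l j : ℕ} {f : S (l + j + 1) → ℝ} (hf : IsBddMeasurable f) :
    IsBddMeasurable fun x => QQ G L l j f x / QQ G L l j (fun _ => 1) x := by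
  have ⟨_, C, hC⟩ := hf
  exact ⟨(isBddMeasurable_QQ hG hf).1.div (isBddMeasurable_QQ hG (IsBddMeasurable.const 1)).1,
    C, abs_QQ_div_le hG hGpos hf hC⟩

lemma isBddMeasurable_Hfun (l j : ℕ) : IsBddMeasurable (Hfun G L l j) := by
  cases j with
  | zero => exact isBddMeasurable_QQ hG (IsBddMeasurable.const 1)
  | succ j => rw [Hfun_succ]; exact isBddMeasurable_QQ_div hG hGpos (hG _)

lemma Hfun_pos (l j : ℕ) (x : S l) : 0 < Hfun G L l j x := by
  cases j with
  | zero => exact QQ_one_pos hG hGpos l 0 x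
  | succ j =>
    rw [Hfun_succ]
    exact div_pos (QQ_pos hG hGpos (hG _) (hGpos _) x) (QQ_one_pos hG hGpos l j x)

lemma isProbabilityMeasure_PhiFK (m : ℕ) (μ : Measure (S m)) [IsProbabilityMeasure μ] :
    IsProbabilityMeasure (PhiFK G L m μ) := by
  have := isProbabilityMeasure_BG (hGpos m) ((hG m).integrable μ)
  unfold PhiFK
  infer_instance

lemma isProbabilityMeasure_PhiBarC (l j : ℕ) (η : ℕ → Measure (S l))
    [∀ n, IsProbabilityMeasure (η n)] (n : ℕ) : IsProbabilityMeasure (PhiBarC G L l j η n) := by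
  induction j generalizing n with
  | zero =>
    have (p : ℕ) : IsProbabilityMeasure (PhiFK G L l (η p)) :=
      isProbabilityMeasure_PhiFK hG hGpos l (η p)
    exact isProbabilityMeasure_avg _ n
  | succ j ih =>
    have (p : ℕ) : IsProbabilityMeasure (PhiFK G L (l + j + 1) (PhiBarC G L l j η p)) :=
      isProbabilityMeasure_PhiFK hG hGpos _ _
    exact isProbabilityMeasure_avg _ n

lemma isProbabilityMeasure_BG_Hfun (l j : ℕ) (μ : Measure (S l)) [IsProbabilityMeasure μ] :
    IsProbabilityMeasure (BG (Hfun G L l j) μ) :=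
  isProbabilityMeasure_BG (Hfun_pos hG hGpos l j)
    ((isBddMeasurable_Hfun hG hGpos l j).integrable μ)

lemma isProbabilityMeasure_PsiBarC (l j : ℕ) (η : ℕ → Measure (S l))
    [∀ n, IsProbabilityMeasure (η n)] (n : ℕ) : IsProbabilityMeasure (PsiBarC G L l j η n) := by
  induction j generalizing n with
  | zero =>
    have (p : ℕ) : IsProbabilityMeasure (BG (Hfun G L l 0) (η p)) :=
      isProbabilityMeasure_BG_Hfun hG hGpos l 0 (η p)
    exact isProbabilityMeasure_avg _ n
  | succ j ih =>
    have (p : ℕ) : IsProbabilityMeasure (BG (Hfun G L l (j + 1)) (PsiBarC G L l j η p)) :=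
      isProbabilityMeasure_BG_Hfun hG hGpos l (j + 1) _
    exact isProbabilityMeasure_avg _ n

lemma integral_PhiFK (m : ℕ) (μ : Measure (S m)) [IsProbabilityMeasure μ] {f : S (m + 1) → ℝ}
    (hf : IsBddMeasurable f) :
    ∫ y, f y ∂(PhiFK G L m μ) = (∫ x, Qstep G L m f x ∂μ) / ∫ x, G m x ∂μ := by
  have := isProbabilityMeasure_BG (hGpos m) ((hG m).integrable μ)
  rw [PhiFK, integral_bind (hf.integrable _),
    integral_BG (hG m).1 (fun x => (hGpos m x).le) ((hG m).integrable μ)]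
  rfl

lemma integral_PhiFK_eq_integral_BG_Hfun_zero (l : ℕ) (μ : Measure (S l))
    [IsProbabilityMeasure μ] {f : S (l + 0 + 1) → ℝ} (hf : IsBddMeasurable f) :
    ∫ y, f y ∂(PhiFK G L l μ) =
      ∫ x, QQ G L l 0 f x / QQ G L l 0 (fun _ => 1) x ∂(BG (Hfun G L l 0) μ) := by
  have hH : Hfun G L l 0 = G l := Qstep_one l
  rw [integral_PhiFK hG hGpos l μ hf, hH,
    integral_BG (hG l).1 (fun x => (hGpos l x).le) ((hG l).integrable μ)]
  congr 1
  refine integral_congr_ae (ae_of_all _ fun x => ?_)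
  simp only [QQ_zero, Qstep_one]
  field_simp [(hGpos l x).ne']

lemma integral_PhiFK_eq_integral_BG_Hfun_succ (l j : ℕ) {ν : Measure (S (l + j + 1))}
    {μ : Measure (S l)} [IsProbabilityMeasure ν] [IsProbabilityMeasure μ]
    (hνμ : ∀ g : S (l + j + 1) → ℝ, IsBddMeasurable g →
      ∫ y, g y ∂ν = ∫ x, QQ G L l j g x / QQ G L l j (fun _ => 1) x ∂μ)
    {f : S (l + (j + 1) + 1) → ℝ} (hf : IsBddMeasurable f) :
    ∫ y, f y ∂(PhiFK G L (l + j + 1) ν) =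
      ∫ x, QQ G L l (j + 1) f x / QQ G L l (j + 1) (fun _ => 1) x
        ∂(BG (Hfun G L l (j + 1)) μ) := by
  have hH : IsBddMeasurable (Hfun G L l (j + 1)) := isBddMeasurable_Hfun hG hGpos l (j + 1)
  rw [integral_PhiFK hG hGpos _ ν hf, hνμ _ (isBddMeasurable_Qstep hG hf), hνμ _ (hG _),
    integral_BG hH.1 (fun x => (Hfun_pos hG hGpos l (j + 1) x).le) (hH.integrable μ)]
  simp only [Hfun_succ, QQ_succ_one]
  congr 1
  refine integral_congr_ae (ae_of_all _ fun x => ?_)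
  have hA : 0 < QQ G L l j (G (l + j + 1)) x := QQ_pos hG hGpos (hG _) (hGpos _) x
  have hB : 0 < QQ G L l j (fun _ => 1) x := QQ_one_pos hG hGpos l j x
  rw [QQ_succ]
  field_simp

theorem integral_PhiBarC (l j : ℕ) (η : ℕ → Measure (S l)) [∀ n, IsProbabilityMeasure (η n)]
    (n : ℕ) {f : S (l + j + 1) → ℝ} (hf : IsBddMeasurable f) :
    ∫ y, f y ∂(PhiBarC G L l j η n) =
      ∫ x, QQ G L l j f x / QQ G L l j (fun _ => 1) x ∂(PsiBarC G L l j η n) := by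
  induction j generalizing n with
  | zero =>
    have (p : ℕ) : IsProbabilityMeasure (PhiFK G L l (η p)) :=
      isProbabilityMeasure_PhiFK hG hGpos l (η p)
    have (p : ℕ) : IsProbabilityMeasure (BG (Hfun G L l 0) (η p)) :=
      isProbabilityMeasure_BG_Hfun hG hGpos l 0 (η p)
    exact integral_avg_congr (fun _ => hf.integrable _)
      (fun _ => (isBddMeasurable_QQ_div hG hGpos hf).integrable _)
      (fun p => integral_PhiFK_eq_integral_BG_Hfun_zero hG hGpos l (η p) hf) n
  | succ j ih =>
    have (p : ℕ) : IsProbabilityMeasure (PhiBarC G L l j η p) :=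
      isProbabilityMeasure_PhiBarC hG hGpos l j η p
    have (p : ℕ) : IsProbabilityMeasure (PsiBarC G L l j η p) :=
      isProbabilityMeasure_PsiBarC hG hGpos l j η p
    have (p : ℕ) : IsProbabilityMeasure (PhiFK G L (l + j + 1) (PhiBarC G L l j η p)) :=
      isProbabilityMeasure_PhiFK hG hGpos _ _
    have (p : ℕ) : IsProbabilityMeasure (BG (Hfun G L l (j + 1)) (PsiBarC G L l j η p)) :=
      isProbabilityMeasure_BG_Hfun hG hGpos l (j + 1) _
    exact integral_avg_congr (fun _ => hf.integrable _)
      (fun _ => (isBddMeasurable_QQ_div hG hGpos hf).integrable _)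
      (fun p => integral_PhiFK_eq_integral_BG_Hfun_succ hG hGpos l j (fun _ => ih p) hf) n

end FeynmanKac

/-- Factorization of the time-averaged Feynman–Kac semigroup:
`Φ̄^{(k,l)}(η) = Ψ̄^{(k,l)}(η) P_{l,k}` where `P_{l,k}(f) = Q_{l,k}(f)/Q_{l,k}(1)`,
stated in weak (integral) form. -/
theorem stmt17 {S : ℕ → Type*} [∀ l, MeasurableSpace (S l)]
    (G : ∀ l, S l → ℝ) (hGmeas : ∀ l, Measurable (G l))
    (hGpos : ∀ l x, 0 < G l x) (hGbd : ∀ l, ∃ C, ∀ x, G l x ≤ C)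
    (L : ∀ l, Kernel (S l) (S (l + 1))) (hL : ∀ l, IsMarkovKernel (L l)) :
    ∀ (l j : ℕ) (η : ℕ → Measure (S l)), (∀ n, IsProbabilityMeasure (η n)) →
      ∀ (n : ℕ) (f : S (l + j + 1) → ℝ), Measurable f → (∃ C, ∀ x, |f x| ≤ C) →
        ∫ y, f y ∂(PhiBarC G L l j η n) =
          ∫ x, QQ G L l j f x / QQ G L l j (fun _ => 1) x
            ∂(PsiBarC G L l j η n) := by
  intro l j η hη n f hf hfC
  have hG (l : ℕ) : IsBddMeasurable (G l) := by
    obtain ⟨C, hC⟩ := hGbd l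
    exact ⟨hGmeas l, C, fun x => (abs_of_pos (hGpos l x)).trans_le (hC x)⟩
  exact integral_PhiBarC hG hGpos l j η n ⟨hf, hfC⟩
end
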